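/- Let M be a matroid, let S be an independent set with an enumeration S = {x₁, …, x_j}, and let e ∉ S be an element such that {e} is independent but S ∪ {e} is dependent. Let i* := max{ i ∈ {1, …, j} : {x₁, …, x_{i−1}} ∪ {e} is independent } (the maximum exists because {e} is independent). Then (S \ {x_{i*}}) ∪ {e} is independent. -/

import Mathlib

open Finset

attribute [local instance] Classical.propDecidable

universe u

/-- A matroid on a ground set `α`, given as a nonempty, downward closed family of
finite independent sets satisfying the augmentation property. -/
structure MatroidOn (α : Type u) where
  Indep : Finset α → Prop
  nonempty : ∃ A, Indep A
  subset_indep : ∀ ⦃A B : Finset α⦄, A ⊆ B → Indep B → Indep A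
  augment : ∀ ⦃A B : Finset α⦄, Indep A → Indep B → A.card < B.card →
    ∃ e ∈ B, e ∉ A ∧ Indep (insert e A)

/-- Submodularity of a set function. -/
def SubmodularFn {α : Type u} [DecidableEq α] (f : Finset α → ℝ) : Prop :=
  ∀ X Y : Finset α, X ⊆ Y → ∀ e, e ∉ Y →
    f (insert e Y) - f Y ≤ f (insert e X) - f X

/-- Monotonicity of a set function. -/
def MonotoneFn {α : Type u} (f : Finset α → ℝ) : Prop :=
  ∀ X Y : Finset α, X ⊆ Y → f X ≤ f Y

variable {α : Type u} [DecidableEq α]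

/-- The marginal gain `f(e | T) = f (T ∪ {e}) - f T`. -/
def marg (f : Finset α → ℝ) (T : Finset α) (e : α) : ℝ := f (insert e T) - f T

/-!
The prefix A = {x₁, …, x_{i*−1}, e} is independent while A ∪ {x_{i*}} is dependent, by
maximality of i* (or, when i* = j, because S ∪ {e} is dependent). Augmenting A from S up to |S|
elements therefore never adds x_{i*}, so it produces a subset of (S \ {x_{i*}}) ∪ {e} of size |S|,
which must be the whole set.
-/

namespace MatroidOn

variable (M : MatroidOn α)

theorem exists_indep_superset_subset_union_card {I J : Finset α} (hI : M.Indep I)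
    (hJ : M.Indep J) {k : ℕ} (hIk : I.card ≤ k) (hkJ : k ≤ J.card) :
    ∃ T, M.Indep T ∧ I ⊆ T ∧ T ⊆ I ∪ J ∧ T.card = k := by
  induction k, hIk using Nat.le_induction with
  | base => exact ⟨I, hI, subset_rfl, subset_union_left, rfl⟩
  | succ k _ ih =>
    obtain ⟨T, hT, hIT, hTIJ, rfl⟩ := ih (Nat.le_of_succ_le hkJ)
    obtain ⟨a, haJ, haT, hTa⟩ := M.augment hT hJ hkJ
    exact ⟨insert a T, by convert hTa, hIT.trans (subset_insert a T),
      insert_subset (mem_union_right I haJ) hTIJ, card_insert_of_notMem haT⟩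

theorem indep_insert_erase_of_not_indep_insert {I J : Finset α} {e y : α} (hI : M.Indep I)
    (hJ : M.Indep J) (hIJ : I ⊆ insert e J) (hyJ : y ∈ J)
    (hyI : ¬ M.Indep (insert y I)) :
    M.Indep (insert e (J.erase y)) := by
  have hsub : ∀ {T}, I ⊆ T → M.Indep T → T ⊆ I ∪ J → T ⊆ insert e (J.erase y) :=
    fun hIT hT hTIJ a ha => by
      have hay : a ≠ y := fun h => hyI (M.subset_indep (insert_subset (h ▸ ha) hIT) hT)
      rcases mem_insert.mp (union_subset hIJ (subset_insert e J) (hTIJ ha)) with rfl | haJ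
      · exact mem_insert_self a _
      · exact mem_insert_of_mem (mem_erase.mpr ⟨hay, haJ⟩)
  have hcard : (insert e (J.erase y)).card ≤ J.card :=
    (card_insert_le _ _).trans (card_erase_add_one hyJ).le
  obtain ⟨T, hT, hIT, hTIJ, hTcard⟩ := M.exists_indep_superset_subset_union_card hI hJ
    ((card_le_card (hsub subset_rfl hI subset_union_left)).trans hcard) le_rfl
  rwa [← eq_of_subset_of_card_le (hsub hIT hT hTIJ) (hTcard ▸ hcard)]

end MatroidOn

theorem swap_candidate_is_independent
    (M : MatroidOn α) {j : ℕ} (x : Fin j → α)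
    (S : Finset α) (hS : S = Finset.univ.image x) (hSind : M.Indep S)
    (e : α) (hdep : ¬ M.Indep (insert e S))
    (istar : Fin j)
    (histar : M.Indep (insert e ((Finset.univ.filter fun t => t < istar).image x)))
    (hmax : ∀ t : Fin j,
      M.Indep (insert e ((Finset.univ.filter fun s => s < t).image x)) → t ≤ istar) :
    M.Indep (insert e (S.erase (x istar))) := by
  simp only [filter_gt_eq_Iio] at histar hmax
  have hclosed : ¬ M.Indep (insert (x istar) (insert e ((Iio istar).image x))) := by
    rw [insert_comm, ← image_insert, Iio_insert]
    by_cases hlast : IsMax istar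
    · rwa [show Iic istar = univ from eq_univ_of_forall fun t => mem_Iic.mpr (hlast.isTop t),
        ← hS]
    · intro hind
      refine (Order.lt_succ_of_not_isMax hlast).not_ge (hmax _ ?_)
      rwa [Iio_succ_eq_Iic_of_not_isMax hlast]
  refine M.indep_insert_erase_of_not_indep_insert histar hSind ?_ ?_ hclosed
  · exact insert_subset_insert e (hS ▸ image_subset_image (subset_univ _))
  · exact hS ▸ mem_image_of_mem x (mem_univ istar)
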